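/- (Consequence of Proposition 7.4.) Let p > 0 and let g : (0,∞) → [0,∞) be C¹ and decreasing, such that z ↦ −z g'(z) is decreasing, and assume g is C² on (0, z_∞), where z_∞ = sup{z > 0 : g'(z) < 0}. Fix y > 0 and t < T. Then for every measurable control v : [t,T] → [1,∞), the solution x(·) of dx(s)/ds = −x(s)/p − v(s) with x(T) = y satisfies ∫_t^T g(x(s)/v(s)) e^{−(T−s)/p} v(s) ds ≥ ∫_t^T g(x_p(s)) e^{−(T−s)/p} ds, where x_p(s) = e^{(T−s)/p}(y + p) − p is the trajectory with v ≡ 1. In other words, v ≡ 1 minimizes the cost ∫_t^T g(x(s)/v(s)) e^{−(T−s)/p} v(s) ds among all controls v ≥ 1. -/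

import Mathlib

/-!
Write `φ(s) = e^{-(T-s)/p} v(s)` and `σ(s) = ∫_s^T φ` for the mass a control spends on `[s, T]`,
so that `x(s) = e^{(T-s)/p} (y + σ(s))`. Since `v ≥ 1`, `σ(s) ≥ p - p e^{-(T-s)/p}`, which bounds
`x / v` by `p (y + σ) / (p - σ)`; as `g` is decreasing, the running cost is at least
`costDensity g y p (σ(s)) * φ(s) = costDensity g y p (σ(s)) * (-σ'(s))`. The substitution
`σ = σ(s)`, valid for every nonnegative integrable `φ`, turns this lower bound into
`∫_0^{σ(t)} costDensity`, and `v ≡ 1` attains it with equality while spending the least mass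
`p - p e^{-(T-t)/p}`.

Where `φ` is not integrable on `(s, T]`, the interval integral in `traj` is `0` by convention and
`x(s) = e^{(T-s)/p} y`. If no integrable tail `(s₀, T]` spends the mass `p - p e^{-(T-t)/p}`, this
happens on an interval `(t, σ)` over which `φ` has infinite mass, and then the cost is infinite.
-/

open MeasureTheory Real Filter Set

/-- The trajectory associated with a control v :
x(s) = e^{(T−s)/p} y + ∫_s^T e^{(s'−s)/p} v(s') ds'. -/
noncomputable def traj (p y T : ℝ) (v : ℝ → ℝ) (s : ℝ) : ℝ :=
  Real.exp ((T - s) / p) * y + ∫ s' in s..T, Real.exp ((s' - s) / p) * v s'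

/-- The free trajectory x_p(s) = e^{(T−s)/p}(y+p) − p, corresponding to v ≡ 1. -/
noncomputable def xpTraj (p y T s : ℝ) : ℝ := Real.exp ((T - s) / p) * (y + p) - p

theorem AntitoneOn.exists_preimage_Iic_inter_Icc_eq {u : ℝ → ℝ} {a b c : ℝ} (hab : a ≤ b)
    (hu : AntitoneOn u (Icc a b)) (hcont : ContinuousOn u (Icc a b)) (hc : c ∈ Icc (u b) (u a)) :
    ∃ s ∈ Icc a b, u s = c ∧ u ⁻¹' Iic c ∩ Icc a b = Icc s b := by
  have hA : IsClosed (u ⁻¹' Iic c ∩ Icc a b) := by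
    rw [inter_comm]
    exact hcont.preimage_isClosed_of_isClosed isClosed_Icc isClosed_Iic
  set A := u ⁻¹' Iic c ∩ Icc a b
  have hb : b ∈ A := ⟨hc.1, right_mem_Icc.2 hab⟩
  have hAbdd : BddBelow A := bddBelow_Icc.mono inter_subset_right
  have hmem : sInf A ∈ A := hA.csInf_mem ⟨b, hb⟩ hAbdd
  obtain ⟨s₁, hs₁, hus₁⟩ := intermediate_value_Icc' hab hcont hc
  refine ⟨sInf A, hmem.2, le_antisymm hmem.1 ?_, subset_antisymm ?_ ?_⟩
  · rw [← hus₁]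
    exact hu hmem.2 hs₁ (csInf_le hAbdd ⟨hus₁.le, hs₁⟩)
  · exact fun s hs ↦ ⟨csInf_le hAbdd hs, hs.2.2⟩
  · intro s hs
    have hs' : s ∈ Icc a b := ⟨hmem.2.1.trans hs.1, hs.2⟩
    exact ⟨(hu hmem.2 hs' hs.1).trans hmem.1, hs'⟩

section Primitive

variable {f : ℝ → ℝ} {a b : ℝ}

theorem antitoneOn_integral_left (hfi : IntegrableOn f (Ioc a b))
    (hf : 0 ≤ᵐ[volume.restrict (Ioc a b)] f) :
    AntitoneOn (fun s ↦ ∫ x in s..b, f x) (Icc a b) := by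
  intro s hs s' hs' hss'
  refine intervalIntegral.integral_mono_interval hss' hs'.2 le_rfl ?_ ?_
  · exact ae_restrict_of_ae_restrict_of_subset (Ioc_subset_Ioc_left hs.1) hf
  · exact (intervalIntegrable_iff_integrableOn_Ioc_of_le hs.2).2
      (hfi.mono_set (Ioc_subset_Ioc_left hs.1))

theorem continuousOn_integral_left (hab : a ≤ b) (hfi : IntegrableOn f (Ioc a b)) :
    ContinuousOn (fun s ↦ ∫ x in s..b, f x) (Icc a b) := by
  have := intervalIntegral.continuousOn_primitive_interval_left (μ := volume) (f := f) (a := a)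
    (b := b) (by rwa [uIcc_of_le hab, integrableOn_Icc_iff_integrableOn_Ioc])
  rwa [uIcc_of_le hab] at this

theorem setLIntegral_preimage_Iic_integral_left (hab : a ≤ b) (hfi : IntegrableOn f (Ioc a b))
    (hf : 0 ≤ᵐ[volume.restrict (Ioc a b)] f) (c : ℝ) :
    ∫⁻ s in (fun s ↦ ∫ x in s..b, f x) ⁻¹' Iic c ∩ Icc a b, ENNReal.ofReal (f s)
      = ENNReal.ofReal (min (∫ x in a..b, f x) c) := by
  set u := fun s ↦ ∫ x in s..b, f x
  have hu := antitoneOn_integral_left hfi hf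
  have hmema : a ∈ Icc a b := left_mem_Icc.2 hab
  have hmemb : b ∈ Icc a b := right_mem_Icc.2 hab
  have hub : u b = 0 := intervalIntegral.integral_same
  have hu_nonneg (s) (hs : s ∈ Icc a b) : 0 ≤ u s := hub ▸ hu hs hmemb hs.2
  rcases lt_or_ge c 0 with hc | hc
  · have hempty : u ⁻¹' Iic c ∩ Icc a b = ∅ :=
      eq_empty_of_forall_notMem fun s hs ↦ (hu_nonneg s hs.2).not_gt (hs.1.trans_lt hc)
    rw [hempty, Measure.restrict_empty, lintegral_zero_measure,
      ENNReal.ofReal_of_nonpos ((min_le_right _ _).trans hc.le)]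
  obtain ⟨s, hs, hus, hlevel⟩ := hu.exists_preimage_Iic_inter_Icc_eq hab
    (continuousOn_integral_left hab hfi) (c := min (u a) c)
    ⟨hub.trans_le (le_min (hu_nonneg a hmema) hc), min_le_left _ _⟩
  have hpre : u ⁻¹' Iic c ∩ Icc a b = Icc s b := by
    rw [← hlevel]
    ext r
    simp only [mem_inter_iff, mem_preimage, mem_Iic, le_min_iff, and_congr_left_iff]
    exact fun hr ↦ ⟨fun h ↦ ⟨hu hmema hr hr.1, h⟩, And.right⟩
  rw [hpre, ← hus, Measure.restrict_congr_set Ioc_ae_eq_Icc.symm,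
    ← ofReal_integral_eq_lintegral_ofReal (hfi.mono_set (Ioc_subset_Ioc_left hs.1))
      (ae_restrict_of_ae_restrict_of_subset (Ioc_subset_Ioc_left hs.1) hf),
    intervalIntegral.integral_of_le hs.2]

theorem map_withDensity_integral_left (hab : a ≤ b) (hfi : IntegrableOn f (Ioc a b))
    (hf : 0 ≤ᵐ[volume.restrict (Ioc a b)] f) :
    ((volume.restrict (Ioc a b)).withDensity fun s ↦ ENNReal.ofReal (f s)).map
        (fun s ↦ ∫ x in s..b, f x) = volume.restrict (Ioc 0 (∫ x in a..b, f x)) := by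
  have hIcc : volume.restrict (Ioc a b) = volume.restrict (Icc a b) :=
    Measure.restrict_congr_set Ioc_ae_eq_Icc
  have : IsFiniteMeasure ((volume.restrict (Ioc a b)).withDensity fun s ↦ ENNReal.ofReal (f s)) :=
    isFiniteMeasure_withDensity_ofReal hfi.2
  have hmeas : AEMeasurable (fun s ↦ ∫ x in s..b, f x)
      ((volume.restrict (Ioc a b)).withDensity fun s ↦ ENNReal.ofReal (f s)) := by
    refine AEMeasurable.mono_ac ?_ (withDensity_absolutelyContinuous _ _)
    rw [hIcc]
    exact (continuousOn_integral_left hab hfi).aemeasurable measurableSet_Icc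
  refine Measure.ext_of_Iic _ _ fun c ↦ ?_
  rw [Measure.map_apply_of_aemeasurable hmeas measurableSet_Iic, withDensity_apply' _, hIcc,
    Measure.restrict_restrict' measurableSet_Icc, Measure.restrict_apply measurableSet_Iic,
    inter_comm (Iic c), Ioc_inter_Iic, Real.volume_Ioc, sub_zero]
  exact setLIntegral_preimage_Iic_integral_left hab hfi hf c

theorem lintegral_ofReal_mul_comp_integral_left (hab : a ≤ b) (hfi : IntegrableOn f (Ioc a b))
    (hf : 0 ≤ᵐ[volume.restrict (Ioc a b)] f) {H : ℝ → ENNReal} (hH : Measurable H) :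
    ∫⁻ s in Ioc a b, ENNReal.ofReal (f s) * H (∫ x in s..b, f x)
      = ∫⁻ σ in Ioc 0 (∫ x in a..b, f x), H σ := by
  have hmeas : AEMeasurable (fun s ↦ ∫ x in s..b, f x) (volume.restrict (Ioc a b)) := by
    rw [Measure.restrict_congr_set Ioc_ae_eq_Icc]
    exact (continuousOn_integral_left hab hfi).aemeasurable measurableSet_Icc
  rw [← map_withDensity_integral_left hab hfi hf,
    lintegral_map' hH.aemeasurable (hmeas.mono_ac (withDensity_absolutelyContinuous _ _)),
    lintegral_withDensity_eq_lintegral_mul₀ (g := fun s ↦ H (∫ x in s..b, f x))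
      hfi.1.aemeasurable.ennreal_ofReal (hH.comp_aemeasurable hmeas)]
  rfl

end Primitive

theorem exists_forall_integrableOn_Ioc_iff {E : Type*} [NormedAddCommGroup E] {f : ℝ → E}
    {a b C : ℝ} (hab : a ≤ b)
    (hbound : ∀ s ∈ Icc a b, IntegrableOn f (Ioc s b) → ∫ x in Ioc s b, ‖f x‖ ≤ C) :
    ∃ σ ∈ Icc a b, ∀ s ∈ Icc a b, IntegrableOn f (Ioc s b) ↔ σ ≤ s := by
  set S := {s ∈ Icc a b | IntegrableOn f (Ioc s b)}
  have hbS : b ∈ S := ⟨right_mem_Icc.2 hab, by simp⟩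
  have hSbdd : BddBelow S := bddBelow_Icc.mono fun s hs ↦ hs.1
  have hσ : sInf S ∈ Icc a b := ⟨le_csInf ⟨b, hbS⟩ fun s hs ↦ hs.1.1, csInf_le hSbdd hbS⟩
  have hgt : ∀ s, sInf S < s → IntegrableOn f (Ioc s b) := fun s hs ↦ by
    obtain ⟨s', hs'S, hs's⟩ := exists_lt_of_csInf_lt ⟨b, hbS⟩ hs
    exact hs'S.2.mono_set (Ioc_subset_Ioc_left hs's.le)
  have hσS : IntegrableOn f (Ioc (sInf S) b) := by
    rcases hσ.2.eq_or_lt with heq | hlt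
    · simp [heq]
    obtain ⟨u, -, hu, hlim⟩ := exists_seq_strictAnti_tendsto' hlt
    exact integrableOn_Ioc_of_intervalIntegral_norm_bounded_left (fun n ↦ hgt _ (hu n).1) hlim
      (Eventually.of_forall fun n ↦
        hbound _ ⟨hσ.1.trans (hu n).1.le, (hu n).2.le⟩ (hgt _ (hu n).1))
  exact ⟨sInf S, hσ, fun s hs ↦
    ⟨fun h ↦ csInf_le hSbdd ⟨hs, h⟩, fun h ↦ hσS.mono_set (Ioc_subset_Ioc_left h)⟩⟩

theorem exists_lintegral_Ioo_eq_top {f : ℝ → ℝ} {a b C : ℝ} (hab : a ≤ b)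
    (hfm : AEStronglyMeasurable f (volume.restrict (Ioc a b))) (hf : ∀ s ∈ Ioc a b, 0 ≤ f s)
    (hbound : ∀ s ∈ Icc a b, IntegrableOn f (Ioc s b) → ∫ x in Ioc s b, ‖f x‖ ≤ C)
    (hnot : ¬ IntegrableOn f (Ioc a b)) :
    ∃ σ ∈ Ioc a b, (∀ s ∈ Ioo a σ, ¬ IntegrableOn f (Ioc s b)) ∧
      ∫⁻ s in Ioo a σ, ENNReal.ofReal (f s) = ⊤ := by
  obtain ⟨σ, hσ, hiff⟩ := exists_forall_integrableOn_Ioc_iff hab hbound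
  have haσ : a < σ := lt_of_not_ge fun h ↦ hnot ((hiff a (left_mem_Icc.2 hab)).2 h)
  have hsub : Ioo a σ ⊆ Ioc a b := fun s hs ↦ ⟨hs.1, hs.2.le.trans hσ.2⟩
  refine ⟨σ, ⟨haσ, hσ.2⟩,
    fun s hs hI ↦ hs.2.not_ge ((hiff s (Ioc_subset_Icc_self (hsub hs))).1 hI), ?_⟩
  by_contra hfin
  refine hnot ?_
  rw [← Ioc_union_Ioc_eq_Ioc haσ.le hσ.2]
  refine IntegrableOn.union ?_ ((hiff σ hσ).2 le_rfl)
  rw [integrableOn_Ioc_iff_integrableOn_Ioo]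
  exact ⟨hfm.mono_set hsub, (hasFiniteIntegral_iff_ofReal
    (ae_restrict_of_forall_mem measurableSet_Ioo fun s hs ↦ hf s (hsub hs))).2
      (lt_top_iff_ne_top.2 hfin)⟩

theorem lintegral_ofReal_sub_eq_top {α : Type*} [MeasurableSpace α] {μ : Measure α}
    [IsFiniteMeasure μ] {f : α → ℝ} (hf : ∫⁻ x, ENNReal.ofReal (f x) ∂μ = ⊤) (c : ℝ) :
    ∫⁻ x, ENNReal.ofReal (f x - c) ∂μ = ⊤ := by
  by_contra h
  have hle : ∫⁻ x, ENNReal.ofReal (f x) ∂μ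
      ≤ ∫⁻ x, ENNReal.ofReal (f x - c) ∂μ + ENNReal.ofReal c * μ univ := by
    rw [← lintegral_const, ← lintegral_add_right _ measurable_const]
    refine lintegral_mono fun x ↦ ?_
    simpa using ENNReal.ofReal_add_le (p := f x - c) (q := c)
  rw [hf, top_le_iff] at hle
  exact ENNReal.add_ne_top.2
    ⟨h, ENNReal.mul_ne_top ENNReal.ofReal_ne_top (measure_ne_top _ _)⟩ hle

theorem traj_eq (p y T : ℝ) (v : ℝ → ℝ) (s : ℝ) :
    traj p y T v s = exp ((T - s) / p) * (y + ∫ s' in s..T, exp (-(T - s') / p) * v s') := by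
  rw [traj, mul_add, ← intervalIntegral.integral_const_mul]
  congr 1
  refine intervalIntegral.integral_congr fun s' _ ↦ ?_
  rw [← mul_assoc, ← exp_add]
  ring_nf

theorem integral_exp_neg_sub_div {p : ℝ} (hp : p ≠ 0) (s T : ℝ) :
    ∫ s' in s..T, exp (-(T - s') / p) = p - p * exp (-(T - s) / p) := by
  have hderiv (x : ℝ) : HasDerivAt (fun x ↦ p * exp (-(T - x) / p)) (exp (-(T - x) / p)) x := by
    have h : HasDerivAt (fun x ↦ -(T - x) / p) (1 / p) x :=
      ((hasDerivAt_id x).const_sub T).neg.div_const p |>.congr_deriv (by simp)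
    exact (h.exp.const_mul p).congr_deriv (by field_simp)
  rw [intervalIntegral.integral_eq_sub_of_hasDerivAt (fun x _ ↦ hderiv x)
    ((by fun_prop : Continuous fun x ↦ exp (-(T - x) / p)).intervalIntegrable _ _)]
  simp

theorem sub_le_integral_exp_mul {p s T : ℝ} (hp : p ≠ 0) (hsT : s ≤ T) {v : ℝ → ℝ}
    (hv1 : ∀ s' ∈ Icc s T, 1 ≤ v s')
    (hI : IntegrableOn (fun s' ↦ exp (-(T - s') / p) * v s') (Ioc s T)) :
    p - p * exp (-(T - s) / p) ≤ ∫ s' in s..T, exp (-(T - s') / p) * v s' := by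
  rw [← integral_exp_neg_sub_div hp]
  refine intervalIntegral.integral_mono_on hsT (Continuous.intervalIntegrable (by fun_prop) _ _)
    ((intervalIntegrable_iff_integrableOn_Ioc_of_le hsT).2 hI) fun x hx ↦ ?_
  exact le_mul_of_one_le_right (exp_pos _).le (hv1 x hx)

/-- `g` at the largest ratio `x / v` available to a control `v ≥ 1` once it has spent the mass
`σ = ∫ e^{-(T-s')/p} v(s') ds'`, see `costDensity_le_of_mass`. -/
noncomputable def costDensity (g : ℝ → ℝ) (y p σ : ℝ) : ℝ :=
  if σ < p then g (p * (y + max σ 0) / (p - max σ 0)) else 0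

section CostDensity

variable {g : ℝ → ℝ} {y p : ℝ}

theorem costDensity_of_nonpos (hp : 0 < p) {σ : ℝ} (hσ : σ ≤ 0) : costDensity g y p σ = g y := by
  rw [costDensity, if_pos (hσ.trans_lt hp), max_eq_right hσ, add_zero, sub_zero,
    mul_div_cancel_left₀ _ hp.ne']

theorem costDensity_free (hp : 0 < p) {s T : ℝ} (hs : s ≤ T) :
    costDensity g y p (p - p * exp (-(T - s) / p)) = g (xpTraj p y T s) := by
  have hE : exp (-(T - s) / p) ≤ 1 :=
    exp_le_one_iff.2 (div_nonpos_of_nonpos_of_nonneg (by linarith) hp.le)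
  have hE0 := exp_pos (-(T - s) / p)
  have hKE : exp ((T - s) / p) * exp (-(T - s) / p) = 1 := by
    rw [neg_div, exp_neg, mul_inv_cancel₀ (exp_pos _).ne']
  rw [costDensity, if_pos (by nlinarith), max_eq_left (by nlinarith), xpTraj]
  congr 1
  rw [div_eq_iff (by nlinarith)]
  linear_combination (-(p * (y + p))) * hKE

variable (hp : 0 < p) (hy : 0 < y) (hgnonneg : ∀ z > 0, 0 ≤ g z) (hgdec : AntitoneOn g (Ioi 0))
include hp hy

theorem costDensity_arg_pos {σ : ℝ} (hσ : σ < p) :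
    0 < p * (y + max σ 0) / (p - max σ 0) := by
  have h0 : 0 ≤ max σ 0 := le_max_right _ _
  have hp' : max σ 0 < p := max_lt hσ hp
  exact div_pos (by positivity) (sub_pos.2 hp')

include hgnonneg

theorem costDensity_nonneg (σ : ℝ) : 0 ≤ costDensity g y p σ := by
  unfold costDensity
  split_ifs with hσ
  exacts [hgnonneg _ (costDensity_arg_pos hp hy hσ), le_rfl]

include hgdec

theorem antitone_costDensity : Antitone (costDensity g y p) := by
  intro a b hab
  by_cases hb : b < p
  · have ha : a < p := hab.trans_lt hb
    rw [costDensity, costDensity, if_pos ha, if_pos hb]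
    refine hgdec (costDensity_arg_pos hp hy ha) (costDensity_arg_pos hp hy hb) ?_
    have hA : 0 ≤ max a 0 := le_max_right _ _
    have hAB : max a 0 ≤ max b 0 := max_le_max hab le_rfl
    have hB : max b 0 < p := max_lt hb hp
    rw [div_le_div_iff₀ (by linarith) (by linarith)]
    nlinarith [mul_nonneg hp.le (mul_nonneg (sub_nonneg.2 hAB) (by linarith : 0 ≤ y + p))]
  · rw [costDensity, if_neg hb]
    exact costDensity_nonneg hp hy hgnonneg a

theorem costDensity_le (σ : ℝ) : costDensity g y p σ ≤ g y :=
  (antitone_costDensity hp hy hgnonneg hgdec (min_le_left σ 0)).trans_eq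
    (costDensity_of_nonpos hp (min_le_right σ 0))

theorem costDensity_le_of_mass {K V σ : ℝ} (hK : 0 < K) (hV : 1 ≤ V) (hσ : 0 ≤ σ)
    (hmass : K * (p - σ) ≤ p) : costDensity g y p σ ≤ g (K * (y + σ) / V) := by
  have hpos : 0 < K * (y + σ) / V := div_pos (mul_pos hK (by linarith)) (by linarith)
  unfold costDensity
  split_ifs with hσp
  · rw [max_eq_left hσ]
    refine hgdec hpos (by simpa [max_eq_left hσ] using costDensity_arg_pos hp hy hσp) ?_
    rw [div_le_div_iff₀ (by linarith) (by linarith)]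
    nlinarith [mul_nonneg (by linarith : 0 ≤ y + σ) (by nlinarith : 0 ≤ p * V - K * (p - σ))]
  · exact hgnonneg _ hpos

end CostDensity

theorem apply_mul_sub_one_le_of_antitoneOn {g : ℝ → ℝ} {y K V : ℝ} (hy : 0 < y)
    (hgnonneg : ∀ z > 0, 0 ≤ g z) (hgdec : AntitoneOn g (Ioi 0)) (hK : 0 < K) (hV : 0 < V) :
    g y * (K⁻¹ * V - 1) ≤ g (K * y / V) * K⁻¹ * V := by
  have hgy := hgnonneg y hy
  have hpos : 0 < K * y / V := by positivity
  rcases lt_or_ge V K with hVK | hKV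
  · have : K⁻¹ * V - 1 < 0 := by
      rw [sub_neg, inv_mul_lt_iff₀ hK, mul_one]
      exact hVK
    nlinarith [mul_nonneg (mul_nonneg (hgnonneg _ hpos) (inv_pos.2 hK).le) hV.le]
  · have hle : K * y / V ≤ y := by
      rw [div_le_iff₀ hV]
      nlinarith
    have := hgdec hpos hy hle
    nlinarith [mul_nonneg (sub_nonneg.2 this) (mul_nonneg (inv_pos.2 hK).le hV.le)]

section Control

variable {g v : ℝ → ℝ} {p y T : ℝ} (hp : 0 < p) (hy : 0 < y) (hgnonneg : ∀ z > 0, 0 ≤ g z)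
  (hgdec : AntitoneOn g (Ioi 0))
include hp hy hgnonneg hgdec

theorem ofReal_integral_le_lintegral_costDensity {t : ℝ} (htT : t ≤ T) :
    ENNReal.ofReal (∫ s in t..T, g (xpTraj p y T s) * exp (-(T - s) / p))
      ≤ ∫⁻ σ in Ioc 0 (p - p * exp (-(T - t) / p)), ENNReal.ofReal (costDensity g y p σ) := by
  have hfree (s) (hs : s ∈ Ioc t T) : g (xpTraj p y T s) * exp (-(T - s) / p)
      = exp (-(T - s) / p) * costDensity g y p (∫ s' in s..T, exp (-(T - s') / p)) := by
    rw [integral_exp_neg_sub_div hp.ne', costDensity_free hp hs.2, mul_comm]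
  have hnonneg (s) (hs : s ∈ Ioc t T) : 0 ≤ g (xpTraj p y T s) * exp (-(T - s) / p) := by
    rw [hfree s hs]
    exact mul_nonneg (exp_pos _).le (costDensity_nonneg hp hy hgnonneg _)
  rw [← integral_exp_neg_sub_div hp.ne' t T,
    ← lintegral_ofReal_mul_comp_integral_left htT
      (Continuous.integrableOn_Ioc (by fun_prop)) (ae_of_all _ fun s ↦ (exp_pos _).le)
      (antitone_costDensity hp hy hgnonneg hgdec).measurable.ennreal_ofReal,
    intervalIntegral.integral_of_le htT]
  calc ENNReal.ofReal (∫ s in Ioc t T, g (xpTraj p y T s) * exp (-(T - s) / p))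
      ≤ ∫⁻ s in Ioc t T, ENNReal.ofReal (g (xpTraj p y T s) * exp (-(T - s) / p)) := by
        by_cases hint : IntegrableOn (fun s ↦ g (xpTraj p y T s) * exp (-(T - s) / p)) (Ioc t T)
        · exact (ofReal_integral_eq_lintegral_ofReal hint
            (ae_restrict_of_forall_mem measurableSet_Ioc hnonneg)).le
        · rw [integral_undef hint, ENNReal.ofReal_zero]
          exact zero_le
    _ = _ := setLIntegral_congr_fun measurableSet_Ioc fun s hs ↦ by
        rw [hfree s hs, ENNReal.ofReal_mul (exp_pos _).le]

theorem lintegral_costDensity_le_cost {s₀ : ℝ} (hs₀ : s₀ ≤ T) (hv1 : ∀ s ∈ Icc s₀ T, 1 ≤ v s)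
    (hI : IntegrableOn (fun s ↦ exp (-(T - s) / p) * v s) (Ioc s₀ T)) :
    ∫⁻ σ in Ioc 0 (∫ s in s₀..T, exp (-(T - s) / p) * v s), ENNReal.ofReal (costDensity g y p σ)
      ≤ ∫⁻ s in Ioc s₀ T,
          ENNReal.ofReal (g (traj p y T v s / v s) * exp (-(T - s) / p) * v s) := by
  have hφ (s) (hs : s ∈ Icc s₀ T) : 0 ≤ exp (-(T - s) / p) * v s :=
    mul_nonneg (exp_pos _).le (zero_le_one.trans (hv1 s hs))
  rw [← lintegral_ofReal_mul_comp_integral_left hs₀ hI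
    (ae_restrict_of_forall_mem measurableSet_Ioc fun s hs ↦ hφ s (Ioc_subset_Icc_self hs))
    (antitone_costDensity hp hy hgnonneg hgdec).measurable.ennreal_ofReal]
  refine setLIntegral_mono' measurableSet_Ioc fun s hs ↦ ?_
  have hsub : Icc s T ⊆ Icc s₀ T := Icc_subset_Icc_left hs.1.le
  set σ := ∫ s' in s..T, exp (-(T - s') / p) * v s'
  have hσ : 0 ≤ σ := intervalIntegral.integral_nonneg hs.2 fun x hx ↦ hφ x (hsub hx)
  have hmass : p - p * exp (-(T - s) / p) ≤ σ := sub_le_integral_exp_mul hp.ne' hs.2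
    (fun x hx ↦ hv1 x (hsub hx)) (hI.mono_set (Ioc_subset_Ioc_left hs.1.le))
  have hKE : exp ((T - s) / p) * exp (-(T - s) / p) = 1 := by
    rw [neg_div, exp_neg, mul_inv_cancel₀ (exp_pos _).ne']
  have hK := exp_pos ((T - s) / p)
  have hbound := costDensity_le_of_mass hp hy hgnonneg hgdec hK (hv1 s (Ioc_subset_Icc_self hs))
    hσ (by nlinarith)
  rw [← ENNReal.ofReal_mul (hφ s (Ioc_subset_Icc_self hs)), traj_eq]
  refine ENNReal.ofReal_le_ofReal ?_
  calc exp (-(T - s) / p) * v s * costDensity g y p σ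
      ≤ exp (-(T - s) / p) * v s * g (exp ((T - s) / p) * (y + σ) / v s) :=
        mul_le_mul_of_nonneg_left hbound (hφ s (Ioc_subset_Icc_self hs))
    _ = _ := by ring

theorem mul_top_le_cost (hv : Measurable v) {t : ℝ} (htT : t ≤ T) (hv1 : ∀ s ∈ Icc t T, 1 ≤ v s)
    (hsmall : ∀ s ∈ Icc t T, IntegrableOn (fun s ↦ exp (-(T - s) / p) * v s) (Ioc s T) →
      ∫ s' in s..T, exp (-(T - s') / p) * v s' < p - p * exp (-(T - t) / p)) :
    ENNReal.ofReal (g y) * ⊤ ≤ ∫⁻ s in Ioc t T,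
      ENNReal.ofReal (g (traj p y T v s / v s) * exp (-(T - s) / p) * v s) := by
  set φ := fun s ↦ exp (-(T - s) / p) * v s
  have hφ (s) (hs : s ∈ Icc t T) : 0 ≤ φ s :=
    mul_nonneg (exp_pos _).le (zero_le_one.trans (hv1 s hs))
  have hmass (s) (hs : s ∈ Icc t T) (hI : IntegrableOn φ (Ioc s T)) :
      ∫ x in Ioc s T, ‖φ x‖ ≤ p := by
    rw [setIntegral_congr_fun measurableSet_Ioc fun x hx ↦
      Real.norm_of_nonneg (hφ x ⟨hs.1.trans hx.1.le, hx.2⟩), ← intervalIntegral.integral_of_le hs.2]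
    nlinarith [hsmall s hs hI, exp_pos (-(T - t) / p)]
  obtain ⟨σ, hσ, hjunk, htop⟩ := exists_lintegral_Ioo_eq_top htT
    (by fun_prop : Measurable φ).aestronglyMeasurable (fun s hs ↦ hφ s (Ioc_subset_Icc_self hs))
    hmass fun hI ↦
      (hsmall t (left_mem_Icc.2 htT) hI).not_ge (sub_le_integral_exp_mul hp.ne' htT hv1 hI)
  calc ENNReal.ofReal (g y) * ⊤
      = ENNReal.ofReal (g y) * ∫⁻ s in Ioo t σ, ENNReal.ofReal (φ s - 1) := by
        rw [lintegral_ofReal_sub_eq_top htop]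
    _ = ∫⁻ s in Ioo t σ, ENNReal.ofReal (g y * (φ s - 1)) := by
        rw [← lintegral_const_mul' _ _ ENNReal.ofReal_ne_top]
        simp only [ENNReal.ofReal_mul (hgnonneg y hy)]
    _ ≤ ∫⁻ s in Ioo t σ,
          ENNReal.ofReal (g (traj p y T v s / v s) * exp (-(T - s) / p) * v s) := by
        refine setLIntegral_mono' measurableSet_Ioo fun s hs ↦ ENNReal.ofReal_le_ofReal ?_
        have hE : exp (-(T - s) / p) = (exp ((T - s) / p))⁻¹ := by rw [neg_div, exp_neg]
        rw [traj_eq, intervalIntegral.integral_undef fun hI ↦ hjunk s hs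
          ((intervalIntegrable_iff_integrableOn_Ioc_of_le (hs.2.le.trans hσ.2)).1 hI), add_zero]
        simp only [φ, hE]
        exact apply_mul_sub_one_le_of_antitoneOn hy hgnonneg hgdec (exp_pos _)
          (zero_lt_one.trans_le (hv1 s ⟨hs.1.le, hs.2.le.trans hσ.2⟩))
    _ ≤ _ := lintegral_mono_set (Ioo_subset_Ioc_self.trans (Ioc_subset_Ioc_right hσ.2))

end Control

theorem stmt_18_general (p y t T : ℝ) (hp : 0 < p) (hy : 0 < y) (htT : t < T)
    (g : ℝ → ℝ)
    (hgnonneg : ∀ z > (0:ℝ), 0 ≤ g z)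
    (hgdec : AntitoneOn g (Set.Ioi 0)) :
    ∀ v : ℝ → ℝ, Measurable v → (∀ s ∈ Set.Icc t T, 1 ≤ v s) →
      ENNReal.ofReal (∫ s in t..T, g (xpTraj p y T s) * Real.exp (-(T - s) / p))
        ≤ ∫⁻ s in Set.Ioc t T,
            ENNReal.ofReal (g (traj p y T v s / v s) * Real.exp (-(T - s) / p) * v s) := by
  intro v hv hv1
  refine (ofReal_integral_le_lintegral_costDensity hp hy hgnonneg hgdec htT.le).trans ?_
  by_cases hlarge : ∃ s₀ ∈ Icc t T,
      IntegrableOn (fun s ↦ exp (-(T - s) / p) * v s) (Ioc s₀ T) ∧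
        p - p * exp (-(T - t) / p) ≤ ∫ s in s₀..T, exp (-(T - s) / p) * v s
  · obtain ⟨s₀, hs₀, hI, hmass⟩ := hlarge
    calc _ ≤ ∫⁻ σ in Ioc 0 (∫ s in s₀..T, exp (-(T - s) / p) * v s),
          ENNReal.ofReal (costDensity g y p σ) := lintegral_mono_set (Ioc_subset_Ioc_right hmass)
      _ ≤ _ := lintegral_costDensity_le_cost hp hy hgnonneg hgdec hs₀.2
          (fun s hs ↦ hv1 s ⟨hs₀.1.trans hs.1, hs.2⟩) hI
      _ ≤ _ := lintegral_mono_set (Ioc_subset_Ioc_left hs₀.1)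
  · push Not at hlarge
    calc _ ≤ ∫⁻ _ in Ioc 0 (p - p * exp (-(T - t) / p)), ENNReal.ofReal (g y) :=
          lintegral_mono fun σ ↦ ENNReal.ofReal_le_ofReal (costDensity_le hp hy hgnonneg hgdec σ)
      _ ≤ ENNReal.ofReal (g y) * ⊤ := by
          rw [setLIntegral_const]
          exact mul_le_mul_right le_top _
      _ ≤ _ := mul_top_le_cost hp hy hgnonneg hgdec hv htT.le hv1 hlarge

/-- consequence of Proposition 7.4: v ≡ 1 minimizes the cost
∫_t^T g(x(s)/v(s)) e^{−(T−s)/p} v(s) ds among all controls v ≥ 1. The cost for a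
general control v ≥ 1 is a (possibly infinite) integral of a nonnegative integrand,
hence is formalized as a lower Lebesgue integral. The condition that g be C² on
(0, z_∞), z_∞ = sup{z > 0 : g'(z) < 0}, is expressed via (0, z_∞) = {z > 0 : g'(z) < 0}. -/
theorem stmt_18 (p y t T : ℝ) (hp : 0 < p) (hy : 0 < y) (htT : t < T)
    (g : ℝ → ℝ)
    (hg1 : ContDiffOn ℝ 1 g (Set.Ioi 0))
    (hgnonneg : ∀ z > (0:ℝ), 0 ≤ g z)
    (hgdec : AntitoneOn g (Set.Ioi 0))
    (hzg : AntitoneOn (fun z => -(z * deriv g z)) (Set.Ioi 0))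
    (hg2 : ContDiffOn ℝ 2 g {z : ℝ | 0 < z ∧ deriv g z < 0}) :
    ∀ v : ℝ → ℝ, Measurable v → (∀ s ∈ Set.Icc t T, 1 ≤ v s) →
      ENNReal.ofReal (∫ s in t..T, g (xpTraj p y T s) * Real.exp (-(T - s) / p))
        ≤ ∫⁻ s in Set.Ioc t T,
            ENNReal.ofReal (g (traj p y T v s / v s) * Real.exp (-(T - s) / p) * v s) :=
  stmt_18_general p y t T hp hy htT g hgnonneg hgdec
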